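/- Let σ₀, ψ₀ ∈ ℝ satisfy 2σ₀² + ψ₀² = 2/3, and let the potential be V ≡ 0. Then on (0, ∞) the functions θ(t) = 1/t, σ(t) = σ₀/t, φ(t) = ψ₀ ln t + c (any constant c), ψ(t) = ψ₀/t satisfy the Einstein–Klein–Gordon evolution system and the Bianchi I constraint σ² + V(φ) + ψ²/2 − θ²/3 = 0 identically. Likewise, θ(t) = 2/t, σ(t) = −1/(√3 t), φ constant, ψ(t) = 0 satisfy the evolution system with V ≡ 0. (These are the exact solutions corresponding to the family Σ and to the critical point P₁, respectively.) -/

import Mathlib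

/-!
With `V ≡ 0` the right-hand sides of the evolution system are homogeneous quadratic in
`(θ, σ, ψ)`, while `(a / t)' = -a / t²`. Hence the ansatz `θ = θ₀ / t`, `σ = σ₀ / t`,
`ψ = ψ₀ / t` solves the system exactly when the coefficients solve it at `t = 1`, an
algebraic condition; `φ` is any primitive of `ψ`. For the family `Σ` these conditions and
the constraint reduce to `2σ₀² + ψ₀² = 2/3`; for `P₁` they hold because `√3² = 3`.
-/

open Real

def SolvesEKG (V θ σ φ ψ : ℝ → ℝ) (t : ℝ) : Prop :=
  HasDerivAt θ (-(1 / 3) * θ t ^ 2 - 2 * σ t ^ 2 + V (φ t) - ψ t ^ 2) t ∧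
  HasDerivAt σ
    (-θ t ^ 2 / (3 * √3) - θ t * σ t + σ t ^ 2 / √3 + (1 / √3) * (V (φ t) + ψ t ^ 2 / 2)) t ∧
  HasDerivAt φ (ψ t) t ∧
  HasDerivAt ψ (-θ t * ψ t - deriv V (φ t)) t

theorem hasDerivAt_const_div_id (a : ℝ) {t : ℝ} (ht : t ≠ 0) :
    HasDerivAt (fun t => a / t) (-a / t ^ 2) t := by
  simpa [div_eq_mul_inv, neg_div] using (hasDerivAt_inv ht).const_mul a

theorem solvesEKG_zero_const_div {θ₀ σ₀ ψ₀ t : ℝ} {φ : ℝ → ℝ} (ht : t ≠ 0)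
    (hθ₀ : -θ₀ = -(1 / 3) * θ₀ ^ 2 - 2 * σ₀ ^ 2 - ψ₀ ^ 2)
    (hσ₀ : -σ₀ = -θ₀ ^ 2 / (3 * √3) - θ₀ * σ₀ + σ₀ ^ 2 / √3 + (1 / √3) * (ψ₀ ^ 2 / 2))
    (hψ₀ : -ψ₀ = -θ₀ * ψ₀) (hφ : HasDerivAt φ (ψ₀ / t) t) :
    SolvesEKG 0 (fun t => θ₀ / t) (fun t => σ₀ / t) φ (fun t => ψ₀ / t) t := by
  refine ⟨?_, ?_, hφ, ?_⟩
  · convert hasDerivAt_const_div_id θ₀ ht using 1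
    rw [hθ₀, Pi.zero_apply]
    ring
  · convert hasDerivAt_const_div_id σ₀ ht using 1
    rw [hσ₀, Pi.zero_apply]
    ring
  · convert hasDerivAt_const_div_id ψ₀ ht using 1
    rw [hψ₀, deriv_zero, Pi.zero_apply]
    ring

theorem exact_solutions_Sigma_and_P1
    (V : ℝ → ℝ) (hV : ∀ x, V x = 0)
    (σ₀ ψ₀ c : ℝ) (h₀ : 2 * σ₀ ^ 2 + ψ₀ ^ 2 = 2 / 3)
    (θ σ φ ψ : ℝ → ℝ)
    (hθ : ∀ t, θ t = 1 / t) (hσ : ∀ t, σ t = σ₀ / t)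
    (hφ : ∀ t, φ t = ψ₀ * Real.log t + c) (hψ : ∀ t, ψ t = ψ₀ / t)
    (c₁ : ℝ) (θ₁ σ₁ φ₁ ψ₁ : ℝ → ℝ)
    (hθ₁ : ∀ t, θ₁ t = 2 / t) (hσ₁ : ∀ t, σ₁ t = -1 / (Real.sqrt 3 * t))
    (hφ₁ : ∀ t, φ₁ t = c₁) (hψ₁ : ∀ t, ψ₁ t = 0) :
    (∀ t ∈ Set.Ioi (0 : ℝ),
      HasDerivAt θ
        (-(1 / 3) * θ t ^ 2 - 2 * σ t ^ 2 + V (φ t) - ψ t ^ 2) t ∧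
      HasDerivAt σ
        (-θ t ^ 2 / (3 * Real.sqrt 3) - θ t * σ t + σ t ^ 2 / Real.sqrt 3
          + (1 / Real.sqrt 3) * (V (φ t) + ψ t ^ 2 / 2)) t ∧
      HasDerivAt φ (ψ t) t ∧
      HasDerivAt ψ (-θ t * ψ t - deriv V (φ t)) t ∧
      σ t ^ 2 + V (φ t) + ψ t ^ 2 / 2 - θ t ^ 2 / 3 = 0) ∧
    (∀ t ∈ Set.Ioi (0 : ℝ),
      HasDerivAt θ₁
        (-(1 / 3) * θ₁ t ^ 2 - 2 * σ₁ t ^ 2 + V (φ₁ t) - ψ₁ t ^ 2) t ∧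
      HasDerivAt σ₁
        (-θ₁ t ^ 2 / (3 * Real.sqrt 3) - θ₁ t * σ₁ t + σ₁ t ^ 2 / Real.sqrt 3
          + (1 / Real.sqrt 3) * (V (φ₁ t) + ψ₁ t ^ 2 / 2)) t ∧
      HasDerivAt φ₁ (ψ₁ t) t ∧
      HasDerivAt ψ₁ (-θ₁ t * ψ₁ t - deriv V (φ₁ t)) t) := by
  obtain rfl : V = 0 := funext hV
  obtain rfl : θ = fun t => 1 / t := funext hθ
  obtain rfl : σ = fun t => σ₀ / t := funext hσ
  obtain rfl : ψ = fun t => ψ₀ / t := funext hψ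
  obtain rfl : θ₁ = fun t => 2 / t := funext hθ₁
  obtain rfl : σ₁ = fun t => (-1 / √3) / t := funext fun t => by rw [hσ₁, div_div]
  obtain rfl : ψ₁ = fun t => 0 / t := funext fun t => by rw [hψ₁, zero_div]
  obtain rfl : φ₁ = fun _ => c₁ := funext hφ₁
  have hs3 : √3 ^ 2 = 3 := sq_sqrt (by norm_num)
  constructor
  · intro t (ht : 0 < t)
    have hφ_deriv : HasDerivAt φ (ψ₀ / t) t := by
      rw [funext hφ, div_eq_mul_inv]
      exact ((hasDerivAt_log ht.ne').const_mul ψ₀).add_const c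
    have hsol : SolvesEKG 0 (fun t => 1 / t) (fun t => σ₀ / t) φ (fun t => ψ₀ / t) t :=
      solvesEKG_zero_const_div ht.ne' (by linear_combination h₀)
        (by field_simp; linear_combination -3 * h₀) (by ring) hφ_deriv
    obtain ⟨hθ', hσ', hφ', hψ'⟩ := hsol
    refine ⟨hθ', hσ', hφ', hψ', ?_⟩
    simp only [Pi.zero_apply]
    field_simp
    linear_combination 3 * h₀
  · intro t (ht : 0 < t)
    refine solvesEKG_zero_const_div ht.ne' ?_ ?_ (by ring) (by simpa using hasDerivAt_const t c₁)
    · field_simp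
      linear_combination -2 * hs3
    · field_simp
      linear_combination 2 * hs3
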